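/- If x is a positive integer that is not equal to l_a for any natural number a, then β(x) ≤ ⌈γ(x)/2⌉. -/

import Mathlib

/-- The Lucas sequence: l 0 = 2, l 1 = 1, l (n+2) = l (n+1) + l n. -/
def lucas : ℕ → ℕ
  | 0 => 2
  | 1 => 1
  | n + 2 => lucas (n + 1) + lucas n

/-- The modified (monotone) Lucas sequence: l̃ 0 = 1, l̃ 1 = 2, l̃ n = l n for n ≥ 2. -/
def ltil : ℕ → ℕ
  | 0 => 1
  | 1 => 2
  | n + 2 => lucas (n + 2)

/-- β x : minimal number of summands in a representation of x as a sum of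
modified Lucas numbers (with repetitions allowed). -/
noncomputable def beta (x : ℕ) : ℕ :=
  sInf {s : ℕ | ∃ k : ℕ, ∃ b : ℕ → ℕ,
    x = ∑ i ∈ Finset.range (k + 1), b i * ltil i ∧ s = ∑ i ∈ Finset.range (k + 1), b i}

/-- γ x : the greatest k with l̃ k ≤ x (for x ≥ 1). -/
noncomputable def gamma (x : ℕ) : ℕ := sSup {k : ℕ | ltil k ≤ x}

/-- S a : the additive submonoid of ℕ generated by {l_a} ∪ {l_a + l_n : n ∈ ℕ}. -/
def Sset (a : ℕ) : AddSubmonoid ℕ :=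
  AddSubmonoid.closure ({lucas a} ∪ {x : ℕ | ∃ n : ℕ, x = lucas a + lucas n})

/-- T a : the additive submonoid of ℕ generated by {l_a + l_n : n ∈ ℕ}. -/
def Tset (a : ℕ) : AddSubmonoid ℕ :=
  AddSubmonoid.closure {x : ℕ | ∃ n : ℕ, x = lucas a + lucas n}

/-!
Greedy decomposition: if `γ(x) = k` and `y = x - l̃_k`, then `y < l̃_{k-1}` because
`l̃_{k+1} ≤ l̃_k + l̃_{k-1}`, so `γ(y) ≤ k - 2`. Either `y` is itself a Lucas number and
`β(x) ≤ 2`, or induction gives `β(x) ≤ 1 + ⌈(k-2)/2⌉ = ⌈k/2⌉`. The recursion bottoms out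
because the positive integers below `l̃_3 = 4` are all Lucas numbers.
-/

open Finset

lemma lucas_pos (n : ℕ) : 0 < lucas n := by
  induction n using Nat.twoStepInduction with
  | zero => decide
  | one => decide
  | more n ih _ => simp only [lucas]; omega

lemma ltil_lt_succ (k : ℕ) : ltil k < ltil (k + 1) := by
  match k with
  | 0 => decide
  | 1 => decide
  | k + 2 =>
    show lucas (k + 2) < lucas (k + 2) + lucas (k + 1)
    have := lucas_pos (k + 1)
    omega

lemma ltil_strictMono : StrictMono ltil := strictMono_nat_of_lt_succ ltil_lt_succ

lemma ltil_add_two_le (k : ℕ) : ltil (k + 2) ≤ ltil (k + 1) + ltil k := by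
  match k with
  | 0 => decide
  | 1 => decide
  | k + 2 => exact le_refl (lucas (k + 3) + lucas (k + 2))

lemma range_ltil : Set.range ltil = Set.range lucas := by
  ext x
  constructor
  · rintro ⟨(_ | _ | k), rfl⟩
    exacts [⟨1, rfl⟩, ⟨0, rfl⟩, ⟨k + 2, rfl⟩]
  · rintro ⟨(_ | _ | a), rfl⟩
    exacts [⟨1, rfl⟩, ⟨0, rfl⟩, ⟨a + 2, rfl⟩]

lemma four_le_of_notMem_range_ltil {x : ℕ} (hx : 0 < x) (h : x ∉ Set.range ltil) : 4 ≤ x := by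
  by_contra! hlt
  exact h ⟨x - 1, by interval_cases x <;> rfl⟩

lemma ltil_le_iff_le_gamma {x : ℕ} (hx : 0 < x) (k : ℕ) : ltil k ≤ x ↔ k ≤ gamma x := by
  have hne : {k : ℕ | ltil k ≤ x}.Nonempty := ⟨0, hx⟩
  have hbdd : BddAbove {k : ℕ | ltil k ≤ x} :=
    ⟨x, fun k hk => ltil_strictMono.le_apply.trans hk⟩
  refine ⟨fun h => le_csSup hbdd h, fun h => ?_⟩
  exact (ltil_strictMono.monotone h).trans (Nat.sSup_mem hne hbdd)

lemma gamma_lt_of_lt_ltil {y k : ℕ} (hy : 0 < y) (h : y < ltil k) : gamma y < k :=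
  not_le.1 fun hle => h.not_ge ((ltil_le_iff_le_gamma hy k).2 hle)

lemma exists_eq_ltil_add_of_notMem_range_ltil {x : ℕ} (hx : 0 < x) (h : x ∉ Set.range ltil) :
    ∃ k y, gamma x = k + 3 ∧ x = ltil (k + 3) + y ∧ 0 < y ∧ y < ltil (k + 2) := by
  have hγ := ltil_le_iff_le_gamma hx
  obtain ⟨k, hk⟩ : ∃ k, gamma x = k + 3 :=
    ⟨gamma x - 3, by have := (hγ 3).1 (four_le_of_notMem_range_ltil hx h); omega⟩
  have hlow : ltil (k + 3) ≤ x := (hγ _).2 hk.ge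
  have hhigh : x < ltil (k + 4) := not_le.1 fun h' => by have := (hγ _).1 h'; omega
  have hne : x ≠ ltil (k + 3) := fun e => h ⟨_, e.symm⟩
  have hadd : ltil (k + 4) ≤ ltil (k + 3) + ltil (k + 2) := ltil_add_two_le (k + 2)
  exact ⟨k, x - ltil (k + 3), hk, by omega, by omega, by omega⟩

lemma sum_range_ite_le {M : Type*} [AddCommMonoid M] {k K : ℕ} (hk : k ≤ K) (f : ℕ → M) :
    ∑ i ∈ range (K + 1), (if i ≤ k then f i else 0) = ∑ i ∈ range (k + 1), f i := by
  rw [← sum_filter]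
  congr 1
  ext i
  simp only [mem_filter, mem_range]
  omega

lemma exists_sum_eq_beta (x : ℕ) : ∃ k : ℕ, ∃ b : ℕ → ℕ,
    x = ∑ i ∈ range (k + 1), b i * ltil i ∧ beta x = ∑ i ∈ range (k + 1), b i :=
  Nat.sInf_mem (s := {s | ∃ k : ℕ, ∃ b : ℕ → ℕ, x = ∑ i ∈ range (k + 1), b i * ltil i ∧
    s = ∑ i ∈ range (k + 1), b i}) ⟨x, 0, fun _ => x, by simp [ltil]⟩

lemma beta_sum_le (k : ℕ) (b : ℕ → ℕ) :
    beta (∑ i ∈ range (k + 1), b i * ltil i) ≤ ∑ i ∈ range (k + 1), b i :=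
  Nat.sInf_le ⟨k, b, rfl, rfl⟩

lemma beta_add_le (x y : ℕ) : beta (x + y) ≤ beta x + beta y := by
  obtain ⟨k, b, rfl, hb⟩ := exists_sum_eq_beta x
  obtain ⟨l, c, rfl, hc⟩ := exists_sum_eq_beta y
  have key := beta_sum_le (max k l) fun i => (if i ≤ k then b i else 0) + (if i ≤ l then c i else 0)
  simp only [add_mul, ite_mul, zero_mul, sum_add_distrib, sum_range_ite_le (le_max_left k l),
    sum_range_ite_le (le_max_right k l)] at key
  rwa [hb, hc]

lemma beta_ltil_le_one (j : ℕ) : beta (ltil j) ≤ 1 := by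
  simpa [ite_mul] using beta_sum_le j (fun i => if i = j then 1 else 0)

lemma beta_ltil_add_le (k y : ℕ) : beta (ltil k + y) ≤ 1 + beta y :=
  (beta_add_le _ _).trans (add_le_add_left (beta_ltil_le_one k) _)

lemma beta_le_of_notMem_range_ltil {x : ℕ} (hx : 0 < x) (h : x ∉ Set.range ltil) :
    beta x ≤ (gamma x + 1) / 2 := by
  induction x using Nat.strong_induction_on with
  | _ x ih =>
  obtain ⟨k, y, hk, rfl, hy_pos, hy_lt⟩ := exists_eq_ltil_add_of_notMem_range_ltil hx h
  have hβ := beta_ltil_add_le (k + 3) y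
  by_cases hy : y ∈ Set.range ltil
  · obtain ⟨j, rfl⟩ := hy
    have := beta_ltil_le_one j
    omega
  · have hyx : y < ltil (k + 3) + y := by
      have : k + 3 ≤ ltil (k + 3) := ltil_strictMono.le_apply
      omega
    have hβy := ih y hyx hy_pos hy
    have hγy := gamma_lt_of_lt_ltil hy_pos hy_lt
    omega

theorem beta_le_ceil_half_gamma (x : ℕ) (hx : 0 < x) (h : ∀ a : ℕ, x ≠ lucas a) :
    beta x ≤ (gamma x + 1) / 2 := by
  refine beta_le_of_notMem_range_ltil hx ?_
  rw [range_ltil]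
  rintro ⟨a, rfl⟩
  exact h a rfl
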